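/- (Noether's theorem, Hamiltonian multivector field version) Let Ω be an (m+1)-form on a manifold F, X an m-multivector field with i(X)Ω = 0, and Y a vector field with i(Y)Ω = dξ for some (m−1)-form ξ. Then L(X)ξ = 0, where L(X) = d∘i(X) − (−1)^m i(X)∘d. -/

import Mathlib

/-!
Abstract calculus of differential forms and multivector fields on a manifold `E`
(in the sense of the appendix of the paper): `Form` is the (ungraded) space of
differential forms, `IsDeg k ω` says `ω` is homogeneous of degree `k`; `VF` is the
space of vector fields and `MVF m` the space of `m`-multivector fields; `d` is the
exterior differential, `iV`/`iM` the interior contractions, `lieV` the Lie derivative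
of forms along a vector field, `vbrk` the Lie bracket of vector fields and `sbrk` the
Schouten–Nijenhuis bracket of a vector field with an `m`-multivector field. -/
structure MVCalc (Form : Type*) [AddCommGroup Form] (VF : Type*) (MVF : ℕ → Type*) where
  d : Form →+ Form
  iV : VF → Form →+ Form
  iM : ∀ m, MVF m → Form →+ Form
  lieV : VF → Form →+ Form
  vbrk : VF → VF → VF
  sbrk : ∀ m, VF → MVF m → MVF m
  IsDeg : ℕ → Form → Prop
  /-- Cartan's magic formula `L_Y = d ∘ i(Y) + i(Y) ∘ d`. -/
  cartan : ∀ Y ω, lieV Y ω = d (iV Y ω) + iV Y (d ω)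
  d_d : ∀ ω, d (d ω) = 0
  d_isDeg : ∀ {k ω}, IsDeg k ω → IsDeg (k + 1) (d ω)
  lieV_d : ∀ Y ω, lieV Y (d ω) = d (lieV Y ω)
  /-- The Lie derivative along the Lie bracket of vector fields is the commutator. -/
  lieV_vbrk : ∀ Y₁ Y₂ ω, lieV (vbrk Y₁ Y₂) ω = lieV Y₁ (lieV Y₂ ω) - lieV Y₂ (lieV Y₁ ω)
  /-- `i([Y,Z])Ω = L(Y) i(Z)Ω − (−1)^{1+m} i(Z) L(Y)Ω` for a vector field `Y` and an
  `m`-multivector field `Z` (Schouten–Nijenhuis bracket identity). -/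
  iM_sbrk : ∀ m Y (Z : MVF m) ω,
    iM m (sbrk m Y Z) ω = lieV Y (iM m Z ω) - ((-1 : ℤ) ^ (1 + m)) • iM m Z (lieV Y ω)
  /-- Contraction of an `m`-multivector field with the 1-contraction of a vector field:
  `i(X) i(Y) Ω = (−1)^m i(Y) i(X) Ω`. -/
  iM_iV_comm : ∀ m (X : MVF m) Y ω, iM m X (iV Y ω) = ((-1 : ℤ) ^ m) • iV Y (iM m X ω)
  /-- On forms of degree `< m` the contraction with an `m`-multivector field vanishes. -/
  iM_lowDeg : ∀ m (X : MVF m) {k ω}, k < m → IsDeg k ω → iM m X ω = 0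

namespace MVCalc
variable {Form : Type*} [AddCommGroup Form] {VF : Type*} {MVF : ℕ → Type*}

/-- The Lie derivative along an `m`-multivector field:
`L(X) = d ∘ i(X) − (−1)^m i(X) ∘ d`. -/
def lieM (C : MVCalc Form VF MVF) (m : ℕ) (X : MVF m) (ω : Form) : Form :=
  C.d (C.iM m X ω) - ((-1 : ℤ) ^ m) • C.iM m X (C.d ω)

end MVCalc

/-! Since `ξ` has degree `m − 1`, `L(X)ξ = ∓ i(X) dξ = ∓ i(X) i(Y) Ω`, and moving `i(Y)` past `i(X)`
turns this into `± i(Y) i(X) Ω = 0`. -/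

namespace MVCalc
variable {Form : Type*} [AddCommGroup Form] {VF : Type*} {MVF : ℕ → Type*}
  (C : MVCalc Form VF MVF)

theorem iM_iV_eq_zero {m : ℕ} {X : MVF m} {ω : Form} (h : C.iM m X ω = 0) (Y : VF) :
    C.iM m X (C.iV Y ω) = 0 := by
  rw [C.iM_iV_comm, h, map_zero, smul_zero]

theorem lieM_of_isDeg_sub_one {m : ℕ} (hm : 1 ≤ m) (X : MVF m) {ξ : Form}
    (hξ : C.IsDeg (m - 1) ξ) : C.lieM m X ξ = -(((-1 : ℤ) ^ m) • C.iM m X (C.d ξ)) := by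
  rw [lieM, C.iM_lowDeg m X (by omega) hξ, map_zero, zero_sub]

end MVCalc

theorem noether_theorem_multivector_general
    {Form : Type*} [AddCommGroup Form] {VF : Type*} {MVF : ℕ → Type*}
    (C : MVCalc Form VF MVF) (m : ℕ) (hm : 1 ≤ m) (Ω ξ : Form)
    (hξ : C.IsDeg (m - 1) ξ)
    (X : MVF m) (hX : C.iM m X Ω = 0)
    (Y : VF) (hY : C.iV Y Ω = C.d ξ) :
    C.lieM m X ξ = 0 := by
  rw [C.lieM_of_isDeg_sub_one hm X hξ, ← hY, C.iM_iV_eq_zero hX, smul_zero, neg_zero]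

/-- Noether's theorem, Hamiltonian multivector field version:
if `i(X)Ω = 0` for an `m`-multivector field `X` and `i(Y)Ω = dξ` for a vector field `Y`
and an `(m−1)`-form `ξ`, then `L(X)ξ = 0`, where `L(X) = d∘i(X) − (−1)^m i(X)∘d`. -/
theorem noether_theorem_multivector
    {Form : Type*} [AddCommGroup Form] {VF : Type*} {MVF : ℕ → Type*}
    (C : MVCalc Form VF MVF) (m : ℕ) (hm : 1 ≤ m) (Ω ξ : Form)
    (hΩ : C.IsDeg (m + 1) Ω) (hξ : C.IsDeg (m - 1) ξ)
    (X : MVF m) (hX : C.iM m X Ω = 0)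
    (Y : VF) (hY : C.iV Y Ω = C.d ξ) :
    C.lieM m X ξ = 0 :=
  noether_theorem_multivector_general C m hm Ω ξ hξ X hX Y hY
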